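/- Let R be a left-linear TRS and (A, λ, Σ_red) a complete, maximal, and core C-labeling for R. If R is outermost ground terminating, then the dynamic labeling DL(A,λ,R) is terminating on the set of correctly labeled ground terms lab(T(Σ,∅)) = { lab(t) | t ground term over Σ }. -/

import Mathlib

/-!
Every term reachable from `lab(t₀)` in `DL(A,λ,R)` has a *shadow*: a ground `Σ`-term whose
subterm values are the labels, where a node `∇_{b,b'}(u)` marks a pending outermost `R`-step of
the shadow whose result, of value `b'`, is the shadow of `u`. Steps of `DL` happen only at
positions below no redex symbol, so by completeness they lie below no redex of the shadow.
A value-preserving labeled `R`-step, and a relabeling step that absorbs a `∇` without changing the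
value, perform an outermost step of the shadow; a value-changing one creates or lifts a `∇`,
leaving the shadow alone and decreasing the number of labeled nodes above all `∇`s.
Left-linearity makes the shadow of a labeled redex an `R`-redex. An infinite `DL`-sequence would
thus yield an infinite outermost `R`-sequence of ground `Σ`-terms.
-/

namespace TRSStmt

/-- First-order terms over a signature `F` with arity function `ar` and variables `V`. -/
inductive Tm (F : Type) (ar : F → ℕ) (V : Type) : Type
  | var : V → Tm F ar V
  | app : (f : F) → (Fin (ar f) → Tm F ar V) → Tm F ar V

variable {F : Type} {ar : F → ℕ} {V W A : Type}

/-- Interpretation of a term in a `Σ`-algebra, given an assignment. -/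
def Tm.eval (I : (f : F) → (Fin (ar f) → A) → A) (α : V → A) : Tm F ar V → A
  | .var x => α x
  | .app f ts => I f (fun i => (ts i).eval I α)

/-- Homomorphic extension of a substitution. -/
def Tm.subst (σ : V → Tm F ar W) : Tm F ar V → Tm F ar W
  | .var x => σ x
  | .app f ts => .app f (fun i => (ts i).subst σ)

/-- A variable occurs in a term. -/
def Tm.occurs (x : V) : Tm F ar V → Prop
  | .var y => y = x
  | .app _ ts => ∃ i, (ts i).occurs x

/-- Subterm at a position (0-indexed). -/
def Tm.subAt : Tm F ar V → List ℕ → Option (Tm F ar V)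
  | t, [] => some t
  | .var _, _ :: _ => none
  | .app f ts, i :: p => if h : i < ar f then (ts ⟨i, h⟩).subAt p else none

/-- Replace the subterm at a position. -/
def Tm.replaceAt : Tm F ar V → List ℕ → Tm F ar V → Option (Tm F ar V)
  | _, [], s => some s
  | .var _, _ :: _, _ => none
  | .app f ts, i :: p, s =>
      if h : i < ar f then
        ((ts ⟨i, h⟩).replaceAt p s).map (fun u => .app f (Function.update ts ⟨i, h⟩ u))
      else none

/-- The root symbol of a term (if any). -/
def Tm.rootSym : Tm F ar V → Option F
  | .var _ => none
  | .app f _ => some f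

/-- The function symbol at a position. -/
def Tm.symAt (t : Tm F ar V) (p : List ℕ) : Option F := (t.subAt p).bind Tm.rootSym

/-- A rewrite rule is a pair of terms. -/
abbrev Rule (F : Type) (ar : F → ℕ) (V : Type) := Tm F ar V × Tm F ar V

/-- A set of rules is a TRS: left-hand sides are no variables and
    right-hand side variables occur on the left. -/
def IsTRS (R : Set (Rule F ar V)) : Prop :=
  ∀ lr ∈ R, (∀ x : V, lr.1 ≠ Tm.var x) ∧ ∀ x : V, lr.2.occurs x → lr.1.occurs x

/-- `t` is a redex with respect to `R`. -/
def IsRedex (R : Set (Rule F ar V)) (t : Tm F ar W) : Prop :=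
  ∃ lr ∈ R, ∃ σ : V → Tm F ar W, t = lr.1.subst σ

/-- Rewrite step at position `p`. -/
def RewAt (R : Set (Rule F ar V)) (p : List ℕ) (t u : Tm F ar W) : Prop :=
  ∃ lr ∈ R, ∃ σ : V → Tm F ar W,
    t.subAt p = some (lr.1.subst σ) ∧ t.replaceAt p (lr.2.subst σ) = some u

/-- Outermost rewrite step at position `p`: no redex strictly above `p`. -/
def OutAt (R : Set (Rule F ar V)) (p : List ℕ) (t u : Tm F ar W) : Prop :=
  RewAt R p t u ∧
    ∀ q, q <+: p → q ≠ p → ∀ s, t.subAt q = some s → ¬ IsRedex R s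

/-- Outermost rewrite step. -/
def OStep (R : Set (Rule F ar V)) (t u : Tm F ar W) : Prop := ∃ p, OutAt R p t u

/-- μ-replacing positions for a replacement map `μ`. -/
inductive MuPos (μ : (f : F) → Fin (ar f) → Prop) : Tm F ar V → List ℕ → Prop
  | nil (t : Tm F ar V) : MuPos μ t []
  | cons (f : F) (ts : Fin (ar f) → Tm F ar V) (i : Fin (ar f)) (p : List ℕ) :
      μ f i → MuPos μ (ts i) p → MuPos μ (Tm.app f ts) (i.val :: p)

/-- Context-sensitive (μ-)rewrite step. -/
def MuStep (R : Set (Rule F ar V)) (μ : (f : F) → Fin (ar f) → Prop)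
    (t u : Tm F ar W) : Prop :=
  ∃ p, RewAt R p t u ∧ MuPos μ t p

/-- No infinite sequence for a relation (termination / strong normalization). -/
def NoInf {τ : Type _} (r : τ → τ → Prop) : Prop :=
  ¬ ∃ g : ℕ → τ, ∀ n, r (g n) (g (n + 1))

/-- One-hole contexts. -/
inductive Ctx (F : Type) (ar : F → ℕ) (V : Type) : Type
  | hole : Ctx F ar V
  | app : (f : F) → (i : Fin (ar f)) → ((j : Fin (ar f)) → j ≠ i → Tm F ar V) →
      Ctx F ar V → Ctx F ar V

/-- Depth of the hole of a context. -/
def Ctx.depth : Ctx F ar V → ℕ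
  | .hole => 0
  | .app _ _ _ C => C.depth + 1

/-- Filling the hole of a context with a term. -/
def Ctx.fill : Ctx F ar V → Tm F ar V → Tm F ar V
  | .hole, s => s
  | .app f i ts C, s => .app f (fun j => if h : j = i then C.fill s else ts j h)

/-- The rule `lr` preserves the interpretation inside every context of depth `n`. -/
def HoldsAtDepth (I : (f : F) → (Fin (ar f) → A) → A) (n : ℕ) (lr : Rule F ar V) : Prop :=
  ∀ (C : Ctx F ar V) (α : V → A), C.depth = n →
    (C.fill lr.1).eval I α = (C.fill lr.2).eval I α

/-- `A` is a C-model for `R`. -/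
def IsCModel (I : (f : F) → (Fin (ar f) → A) → A) (R : Set (Rule F ar V)) : Prop :=
  ∀ lr ∈ R, ∃ n, HoldsAtDepth I n lr

/-- `A` is a model for `R`. -/
def IsModel (I : (f : F) → (Fin (ar f) → A) → A) (R : Set (Rule F ar V)) : Prop :=
  ∀ lr ∈ R, ∀ α : V → A, lr.1.eval I α = lr.2.eval I α

section Label
variable {L : F → Type}

/-- Labeled signature: symbols with a label. -/
abbrev LSym (F : Type) (L : F → Type) := Σ f : F, L f

/-- Arity on the labeled signature. -/
abbrev lar (ar : F → ℕ) : LSym F L → ℕ := fun g => ar g.1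

/-- Semantic labeling of a term with respect to an assignment. -/
def labT (I : (f : F) → (Fin (ar f) → A) → A)
    (lf : ∀ f : F, (Fin (ar f) → A) → L f) (α : V → A) :
    Tm F ar V → Tm (LSym F L) (lar ar) V
  | .var x => .var x
  | .app f ts => .app ⟨f, lf f (fun i => (ts i).eval I α)⟩ (fun i => labT I lf α (ts i))

end Label

/-- Evaluation of ground terms. -/
def geval (I : (f : F) → (Fin (ar f) → A) → A) : Tm F ar Empty → A :=
  Tm.eval I (fun x => x.elim)

/-- Labeling of ground terms. -/
def glab {L : F → Type} (I : (f : F) → (Fin (ar f) → A) → A)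
    (lf : ∀ f : F, (Fin (ar f) → A) → L f) :
    Tm F ar Empty → Tm (LSym F L) (lar ar) Empty :=
  labT I lf (fun x => x.elim)

/-- Terms not containing the symbol `tp`. -/
def tpFree (tp : F) : Tm F ar V → Prop
  | .var _ => True
  | .app f ts => f ≠ tp ∧ ∀ i, tpFree tp (ts i)

/-- The term `top(s)`. -/
def topT (tp : F) (s : Tm F ar V) : Tm F ar V := Tm.app tp (fun _ => s)

/-- Number of occurrences of a variable in a term. -/
def countV [DecidableEq V] (x : V) : Tm F ar V → ℕ
  | .var y => if y = x then 1 else 0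
  | .app _ ts => ∑ i, countV x (ts i)

/-- Linear terms: every variable occurs at most once. -/
def Linear [DecidableEq V] (t : Tm F ar V) : Prop := ∀ x : V, countV x t ≤ 1

/-- Quasi-left-linear TRS. -/
def QuasiLeftLinear [DecidableEq V] (R : Set (Rule F ar V)) : Prop :=
  ∀ lr ∈ R, ¬ Linear lr.1 →
    ∃ lr' ∈ R, Linear lr'.1 ∧ ∃ σ : V → Tm F ar V, lr.1 = lr'.1.subst σ

end TRSStmt

namespace TRSStmt

variable {F : Type} {ar : F → ℕ} {V A : Type} {L : F → Type}

/-- Soundness of a C-labeling `(A, λ, Σ_red)` (with top symbol `tp`):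
    a ground `tp`-free term whose labeled root is a redex symbol is a redex. -/
def SoundLab (I : (f : F) → (Fin (ar f) → A) → A)
    (lf : ∀ f : F, (Fin (ar f) → A) → L f) (tp : F)
    (R : Set (Rule F ar V)) (Sred : Set (LSym F L)) : Prop :=
  ∀ t : Tm F ar Empty, tpFree tp t →
    ∀ g ∈ Sred, (glab I lf t).rootSym = some g → IsRedex R t

/-- Completeness of a C-labeling: every ground `tp`-free redex has its
    labeled root in `Σ_red`. -/
def CompleteLab (I : (f : F) → (Fin (ar f) → A) → A)
    (lf : ∀ f : F, (Fin (ar f) → A) → L f) (tp : F)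
    (R : Set (Rule F ar V)) (Sred : Set (LSym F L)) : Prop :=
  ∀ t : Tm F ar Empty, tpFree tp t → IsRedex R t →
    ∃ g ∈ Sred, (glab I lf t).rootSym = some g

/-- A core algebra (relative to the `tp`-free signature `Σ`):
    every element is the interpretation of a ground term over `Σ`. -/
def CoreAlg (I : (f : F) → (Fin (ar f) → A) → A) (tp : F) : Prop :=
  ∀ a : A, ∃ t : Tm F ar Empty, tpFree tp t ∧ geval I t = a

/-- Prepending the flat context `f(x₁,…,□ at i,…,xₙ)` to a term. -/
def flatExt (f : F) (i : Fin (ar f)) (xs : ∀ j : Fin (ar f), j ≠ i → V)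
    (t : Tm F ar V) : Tm F ar V :=
  Tm.app f (fun j => if h : j = i then t else Tm.var (xs j h))

/-- The iterated flat-context extension of rule–assignment pairs
    underlying the dynamic context extension `CE(A,λ,R)`. -/
inductive Reach (I : (f : F) → (Fin (ar f) → A) → A)
    (lf : ∀ f : F, (Fin (ar f) → A) → L f)
    (R : Set (Rule F ar V)) (Sred : Set (LSym F L)) :
    Tm F ar V → Tm F ar V → (V → A) → Prop
  | base (l r : Tm F ar V) (α : V → A) : (l, r) ∈ R → Reach I lf R Sred l r α
  | step (l r : Tm F ar V) (α : V → A) (f : F) (i : Fin (ar f))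
      (xs : ∀ j : Fin (ar f), j ≠ i → V) (α' : V → A) :
      Reach I lf R Sred l r α →
      (l.eval I α ≠ r.eval I α ∨ ∃ x, r = Tm.var x) →
      (∀ j h, ¬ l.occurs (xs j h)) →
      (∀ j h j' h', xs j h = xs j' h' → j = j') →
      (∀ x : V, l.occurs x → α' x = α x) →
      (∀ g ∈ Sred, (labT I lf α' (flatExt f i xs l)).rootSym ≠ some g) →
      Reach I lf R Sred (flatExt f i xs l) (flatExt f i xs r) α'

/-- The rules of the dynamic context extension `CE(A,λ,R)`:
    labelings of the fully extended rule–assignment pairs. -/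
def CE (I : (f : F) → (Fin (ar f) → A) → A)
    (lf : ∀ f : F, (Fin (ar f) → A) → L f)
    (R : Set (Rule F ar V)) (Sred : Set (LSym F L)) :
    Set (Rule (LSym F L) (lar ar) V) :=
  { p | ∃ (l r : Tm F ar V) (α : V → A),
      Reach I lf R Sred l r α ∧ l.eval I α = r.eval I α ∧ (∀ x : V, r ≠ Tm.var x) ∧
      p = (labT I lf α l, labT I lf α r) }

/-- The replacement map of the transformed system:
    all arguments of redex symbols are frozen. -/
def ceMu (Sred : Set (LSym F L)) : (g : LSym F L) → Fin (lar ar g) → Prop :=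
  fun g _ => g ∉ Sred

/-- Outermost ground termination of `R` over the `tp`-free signature `Σ`. -/
def OGTtp (R : Set (Rule F ar V)) (tp : F) : Prop :=
  ¬ ∃ g : ℕ → Tm F ar Empty,
      (∀ n, tpFree tp (g n)) ∧ ∀ n, OStep R (g n) (g (n + 1))

end TRSStmt

namespace TRSStmt

variable {F : Type} {ar : F → ℕ} {V A : Type} {L : F → Type}

/-- Closure generating the value-change pairs (before removing diagonal pairs). -/
inductive VCpre (I : (f : F) → (Fin (ar f) → A) → A)
    (lf : ∀ f : F, (Fin (ar f) → A) → L f)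
    (R : Set (Rule F ar V)) (Sred : Set (LSym F L)) : A → A → Prop
  | base (lr : Rule F ar V) (hlr : lr ∈ R) (α : V → A)
      (hne : lr.1.eval I α ≠ lr.2.eval I α) :
      VCpre I lf R Sred (lr.1.eval I α) (lr.2.eval I α)
  | step (b b' : A) (h : VCpre I lf R Sred b b') (f : F)
      (as : Fin (ar f) → A) (i : Fin (ar f)) (hi : as i = b)
      (hred : (⟨f, lf f as⟩ : LSym F L) ∉ Sred) :
      VCpre I lf R Sred (I f as) (I f (Function.update as i b'))

/-- The set of value-change pairs `VC(λ,R)` (diagonal pairs removed). -/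
def VC (I : (f : F) → (Fin (ar f) → A) → A)
    (lf : ∀ f : F, (Fin (ar f) → A) → L f)
    (R : Set (Rule F ar V)) (Sred : Set (LSym F L)) (b b' : A) : Prop :=
  VCpre I lf R Sred b b' ∧ b ≠ b'

/-- The relation `⤳` on value-change pairs. -/
def Lead (I : (f : F) → (Fin (ar f) → A) → A)
    (lf : ∀ f : F, (Fin (ar f) → A) → L f)
    (R : Set (Rule F ar V)) (Sred : Set (LSym F L)) (p q : A × A) : Prop :=
  VC I lf R Sred p.1 p.2 ∧ VC I lf R Sred q.1 q.2 ∧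
  ∃ (f : F) (as : Fin (ar f) → A) (i : Fin (ar f)),
    as i = p.1 ∧ (⟨f, lf f as⟩ : LSym F L) ∉ Sred ∧
    q.1 = I f as ∧ q.2 = I f (Function.update as i p.2)

end TRSStmt

namespace TRSStmt

variable {F : Type} {ar : F → ℕ} {A : Type} {L : F → Type}

/-- The signature of the dynamic labeling: labeled symbols plus the
    fresh unary relabel symbols `∇_{a,a'}`. -/
abbrev DSym (F : Type) (L : F → Type) (A : Type) := LSym F L ⊕ (A × A)

/-- Arities for the dynamic labeling signature. -/
abbrev dar (ar : F → ℕ) : DSym F L A → ℕ := Sum.elim (lar ar) (fun _ => 1)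

/-- Inclusion of labeled terms into terms over the dynamic labeling signature. -/
def embL {W : Type} : Tm (LSym F L) (lar ar) W → Tm (DSym F L A) (dar ar) W
  | .var x => .var x
  | .app g ts => .app (Sum.inl g) (fun i => embL (ts i))

/-- `∇_{b,b'}(t)`. -/
def nabla {W : Type} (b b' : A) (t : Tm (DSym F L A) (dar ar) W) :
    Tm (DSym F L A) (dar ar) W :=
  Tm.app (Sum.inr (b, b')) (fun _ => t)

/-- The labeled original rules of the dynamic labeling `DL(A,λ,R)`. -/
def DLorg (I : (f : F) → (Fin (ar f) → A) → A)
    (lf : ∀ f : F, (Fin (ar f) → A) → L f)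
    (R : Set (Rule F ar ℕ)) : Set (Rule (DSym F L A) (dar ar) ℕ) :=
  { p | ∃ lr ∈ R, ∃ α : ℕ → A,
      p.1 = embL (labT I lf α lr.1) ∧
      ((lr.1.eval I α = lr.2.eval I α ∧ p.2 = embL (labT I lf α lr.2)) ∨
       (lr.1.eval I α ≠ lr.2.eval I α ∧
         p.2 = nabla (lr.1.eval I α) (lr.2.eval I α) (embL (labT I lf α lr.2)))) }

/-- The relabeling rules of the dynamic labeling `DL(A,λ,R)`. -/
def DLprp (I : (f : F) → (Fin (ar f) → A) → A)
    (lf : ∀ f : F, (Fin (ar f) → A) → L f)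
    (R : Set (Rule F ar ℕ)) (Sred : Set (LSym F L)) :
    Set (Rule (DSym F L A) (dar ar) ℕ) :=
  { p | ∃ (f : F) (as : Fin (ar f) → A) (i : Fin (ar f)) (b b' : A),
      VC I lf R Sred b b' ∧ as i = b ∧
      (⟨f, lf f as⟩ : LSym F L) ∉ Sred ∧
      p.1 = Tm.app (Sum.inl (⟨f, lf f as⟩ : LSym F L))
              (fun j => if j = i then nabla b b' (Tm.var (j : ℕ)) else Tm.var (j : ℕ)) ∧
      ((I f as = I f (Function.update as i b') ∧
         p.2 = Tm.app (Sum.inl (⟨f, lf f (Function.update as i b')⟩ : LSym F L))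
                 (fun j => Tm.var (j : ℕ))) ∨
       (I f as ≠ I f (Function.update as i b') ∧
         p.2 = nabla (I f as) (I f (Function.update as i b'))
                 (Tm.app (Sum.inl (⟨f, lf f (Function.update as i b')⟩ : LSym F L))
                    (fun j => Tm.var (j : ℕ))))) }

/-- The replacement map of the dynamic labeling: all arguments of `∇`-symbols
    and of redex symbols are frozen. -/
def dlMu (Sred : Set (LSym F L)) : (g : DSym F L A) → Fin (dar ar g) → Prop :=
  fun g _ => match g with
    | Sum.inl h => h ∉ Sred
    | Sum.inr _ => False

/-- `n`-fold composition of a relation. -/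
def itN {τ : Type _} (r : τ → τ → Prop) : ℕ → τ → τ → Prop
  | 0 => fun a b => a = b
  | n + 1 => fun a c => ∃ b, r a b ∧ itN r n b c

end TRSStmt

namespace TRSStmt

theorem not_exists_chain_of_lex_simulation {α β : Type*} {r : α → α → Prop}
    {step : β → β → Prop} {rel : β → α → Prop} (m : β → ℕ) (hr : NoInf r)
    (hsim : ∀ t u s, rel t s → step t u → ∃ s', rel u s' ∧ (r s s' ∨ (s' = s ∧ m u < m t)))
    {t : β} {s : α} (hts : rel t s) : ¬ ∃ g : ℕ → β, g 0 = t ∧ ∀ n, step (g n) (g (n + 1)) := by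
  have hwf : WellFounded (Prod.Lex (flip r) (· < ·) : α × ℕ → α × ℕ → Prop) :=
    (wellFounded_iff_isEmpty_descending_chain.mpr ⟨fun ⟨f, hf⟩ => hr ⟨f, hf⟩⟩).prod_lex
      wellFounded_lt
  suffices ∀ x : α × ℕ, ∀ t s, x = (s, m t) → rel t s →
      ∀ g : ℕ → β, g 0 = t → (∀ n, step (g n) (g (n + 1))) → False from
    fun ⟨g, hg0, hg⟩ => this _ t s rfl hts g hg0 hg
  intro x
  induction x using hwf.induction with
  | _ x ih =>
    rintro t s rfl hts g rfl hg
    obtain ⟨s', hs', hlex⟩ := hsim _ _ _ hts (hg 0)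
    refine ih (s', m (g 1)) ?_ _ _ rfl hs' (fun n => g (n + 1)) rfl (fun n => hg (n + 1))
    rcases hlex with h | ⟨rfl, h⟩
    · exact Prod.Lex.left _ _ h
    · exact Prod.Lex.right _ h

section Terms

variable {F : Type} {ar : F → ℕ} {V W A : Type}

theorem Tm.eval_congr (I : (f : F) → (Fin (ar f) → A) → A) {α β : V → A} (t : Tm F ar V)
    (h : ∀ x, t.occurs x → α x = β x) : t.eval I α = t.eval I β := by
  induction t with
  | var x => exact h x rfl
  | app f ts ih => exact congrArg (I f) (funext fun i => ih i fun x hx => h x ⟨i, hx⟩)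

theorem Tm.subst_congr {σ σ' : V → Tm F ar W} (t : Tm F ar V)
    (h : ∀ x, t.occurs x → σ x = σ' x) : t.subst σ = t.subst σ' := by
  induction t with
  | var x => exact h x rfl
  | app f ts ih => exact congrArg (Tm.app f) (funext fun i => ih i fun x hx => h x ⟨i, hx⟩)

theorem Tm.eval_subst (I : (f : F) → (Fin (ar f) → A) → A) (σ : V → Tm F ar W) (β : W → A)
    (t : Tm F ar V) : (t.subst σ).eval I β = t.eval I (fun x => (σ x).eval I β) := by
  induction t with
  | var x => rfl
  | app f ts ih => exact congrArg (I f) (funext ih)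

theorem geval_subst_eq (I : (f : F) → (Fin (ar f) → A) → A) (σ : V → Tm F ar Empty)
    {α : V → A} (t : Tm F ar V) (h : ∀ x, t.occurs x → geval I (σ x) = α x) :
    geval I (t.subst σ) = t.eval I α :=
  (Tm.eval_subst I σ _ t).trans (Tm.eval_congr I t h)

theorem geval_app_update (I : (f : F) → (Fin (ar f) → A) → A) {f : F}
    (ss : Fin (ar f) → Tm F ar Empty) (i : Fin (ar f)) (s : Tm F ar Empty) :
    geval I (.app f (Function.update ss i s)) =
      I f (Function.update (fun j => geval I (ss j)) i (geval I s)) :=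
  congrArg (I f) (funext (Function.apply_update (fun _ => geval I) ss i s))

theorem Tm.subAt_append (p q : List ℕ) (t : Tm F ar V) :
    t.subAt (p ++ q) = (t.subAt p).bind (Tm.subAt · q) := by
  induction p generalizing t with
  | nil => simp [Tm.subAt]
  | cons i p ih =>
    cases t with
    | var x => rfl
    | app f ts =>
      simp only [List.cons_append, Tm.subAt]
      split
      · exact ih _
      · rfl

theorem Tm.replaceAt_self_of_subAt {p : List ℕ} {t w : Tm F ar V}
    (h : t.subAt p = some w) : t.replaceAt p w = some t := by
  induction p generalizing t with
  | nil =>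
    obtain rfl : t = w := by simpa [Tm.subAt] using h
    simp [Tm.replaceAt]
  | cons i p ih =>
    cases t with
    | var x => cases h
    | app f ts =>
      simp only [Tm.subAt] at h
      split at h
      next hlt =>
        simp only [Tm.replaceAt, dif_pos hlt, ih h, Option.map_some, Function.update_eq_self]
      next => cases h

theorem Tm.replaceAt_append {p q : List ℕ} {t w w' t' v : Tm F ar V}
    (hw : t.subAt p = some w) (hw' : w.replaceAt q v = some w')
    (ht' : t.replaceAt p w' = some t') : t.replaceAt (p ++ q) v = some t' := by
  induction p generalizing t t' with
  | nil =>
    obtain rfl : t = w := by simpa [Tm.subAt] using hw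
    obtain rfl : w' = t' := by simpa [Tm.replaceAt] using ht'
    exact hw'
  | cons i p ih =>
    cases t with
    | var x => cases hw
    | app f ts =>
      simp only [Tm.subAt] at hw
      split at hw
      next hlt =>
        simp only [List.cons_append, Tm.replaceAt, dif_pos hlt] at ht' ⊢
        obtain ⟨u, hu, rfl⟩ := Option.map_eq_some_iff.mp ht'
        rw [ih hw hu, Option.map_some]
      next => cases hw

theorem Tm.one_le_countV_of_occurs [DecidableEq V] {x : V} {t : Tm F ar V}
    (h : t.occurs x) : 1 ≤ countV x t := by
  induction t with
  | var y => simp [countV, show y = x from h]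
  | app f ts ih =>
    obtain ⟨i, hi⟩ := h
    exact (ih i hi).trans
      (Finset.single_le_sum (f := fun j => countV x (ts j)) (by simp) (Finset.mem_univ i))

theorem Linear.of_app [DecidableEq V] {f : F} {ts : Fin (ar f) → Tm F ar V}
    (h : Linear (Tm.app f ts)) (i : Fin (ar f)) : Linear (ts i) := fun x =>
  (Finset.single_le_sum (f := fun j => countV x (ts j)) (by simp) (Finset.mem_univ i)).trans (h x)

theorem Linear.eq_of_occurs [DecidableEq V] {f : F} {ts : Fin (ar f) → Tm F ar V}
    (h : Linear (Tm.app f ts)) {x : V} {i j : Fin (ar f)}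
    (hi : (ts i).occurs x) (hj : (ts j).occurs x) : i = j := by
  by_contra hij
  have := calc
    countV x (ts i) + countV x (ts j) = ∑ k ∈ {i, j}, countV x (ts k) :=
      (Finset.sum_pair (f := fun k => countV x (ts k)) hij).symm
    _ ≤ ∑ k, countV x (ts k) := Finset.sum_le_sum_of_subset (Finset.subset_univ _)
    _ ≤ 1 := h x
  have := Tm.one_le_countV_of_occurs hi
  have := Tm.one_le_countV_of_occurs hj
  omega

theorem Finset.sum_comp_update_add {ι X M : Type*} [Fintype ι] [DecidableEq ι] [AddCommMonoid M]
    (g : X → M) (ts : ι → X) (i : ι) (u : X) :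
    ∑ j, g (Function.update ts i u j) + g (ts i) = ∑ j, g (ts j) + g u := by
  simp_rw [Function.apply_update (fun _ => g)]
  rw [Finset.sum_update_of_mem (Finset.mem_univ i), Finset.sdiff_singleton_eq_erase,
    ← Finset.add_sum_erase _ _ (Finset.mem_univ i), add_comm (g (ts i)), add_assoc, add_comm]

theorem OutAt.root {R : Set (Rule F ar V)} {lr : Rule F ar V} (hlr : lr ∈ R)
    (σ : V → Tm F ar W) : OutAt R [] (lr.1.subst σ) (lr.2.subst σ) :=
  ⟨⟨lr, hlr, σ, by simp [Tm.subAt], by simp [Tm.replaceAt]⟩,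
    fun _ hq hne => absurd (List.prefix_nil.mp hq) hne⟩

theorem OutAt.append {R : Set (Rule F ar V)} {p q : List ℕ} {t t' w w' : Tm F ar W}
    (hw : t.subAt p = some w) (hout : OutAt R q w w') (ht' : t.replaceAt p w' = some t')
    (habove : ∀ q', q' <+: p → q' ≠ p → ∀ s, t.subAt q' = some s → ¬ IsRedex R s) :
    OutAt R (p ++ q) t t' := by
  obtain ⟨⟨lr, hlr, σ, hsub, hrepl⟩, hnr⟩ := hout
  have hbelow : ∀ r, r <+: q → r ≠ q → ∀ s, t.subAt (p ++ r) = some s → ¬ IsRedex R s := by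
    intro r hr hrq s hs
    rw [Tm.subAt_append, hw] at hs
    exact hnr r hr hrq s hs
  refine ⟨⟨lr, hlr, σ, by rw [Tm.subAt_append, hw]; exact hsub,
    Tm.replaceAt_append hw hrepl ht'⟩, fun q' hq' hne s hs => ?_⟩
  rcases List.prefix_or_prefix_of_prefix (List.prefix_append p q) hq' with ⟨r, rfl⟩ | hq'p
  · exact hbelow r ((List.prefix_append_right_inj p).mp hq') (fun h => hne (by rw [h])) s hs
  · by_cases hqp : q' = p
    · subst hqp
      refine hbelow [] List.nil_prefix (fun h => hne (by simp [← h])) s ?_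
      rwa [List.append_nil]
    · exact habove q' hq'p hqp s hs

theorem OutAt.cons {R : Set (Rule F ar V)} {f : F} {ts : Fin (ar f) → Tm F ar W}
    (i : Fin (ar f)) {p : List ℕ} {u : Tm F ar W} (hnr : ¬ IsRedex R (Tm.app f ts))
    (hout : OutAt R p (ts i) u) :
    OutAt R ((i : ℕ) :: p) (Tm.app f ts) (Tm.app f (Function.update ts i u)) := by
  refine OutAt.append (p := [(i : ℕ)]) ?_ hout ?_ ?_
  · simp [Tm.subAt]
  · simp [Tm.replaceAt]
  · intro q hq hne s hs
    rcases List.prefix_cons_iff.mp hq with rfl | ⟨q', rfl, hq'⟩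
    · obtain rfl : Tm.app f ts = s := by simpa [Tm.subAt] using hs
      exact hnr
    · exact absurd (by rw [List.prefix_nil.mp hq']) hne

end Terms

section LiveCount

variable {F : Type} {ar : F → ℕ} {A W : Type} {L : F → Type}

def liveCount : Tm (DSym F L A) (dar ar) W → ℕ
  | .var _ => 0
  | .app (Sum.inl _) ts => 1 + ∑ i, liveCount (ts i)
  | .app (Sum.inr _) _ => 0

theorem liveCount_replaceAt {Sred : Set (LSym F L)} {t : Tm (DSym F L A) (dar ar) W} {p : List ℕ}
    (hp : MuPos (dlMu Sred) t p) {w a t' : Tm (DSym F L A) (dar ar) W}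
    (hw : t.subAt p = some w) (ht' : t.replaceAt p a = some t') :
    liveCount t' + liveCount w = liveCount t + liveCount a := by
  induction hp generalizing w t' with
  | nil t =>
    obtain rfl : t = w := by simpa [Tm.subAt] using hw
    obtain rfl : a = t' := by simpa [Tm.replaceAt] using ht'
    omega
  | cons f ts i p hμ hp ih =>
    cases f with
    | inr => exact absurd hμ (by simp [dlMu])
    | inl =>
      simp only [Tm.subAt, dif_pos i.isLt, Fin.eta] at hw
      simp only [Tm.replaceAt, dif_pos i.isLt, Fin.eta] at ht'
      obtain ⟨u, hu, rfl⟩ := Option.map_eq_some_iff.mp ht'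
      have := ih hw hu
      have := Finset.sum_comp_update_add liveCount ts i u
      simp only [liveCount]
      omega

end LiveCount

section Shadow

abbrev DLTerm (F : Type) (ar : F → ℕ) (A : Type) : Type :=
  Tm (DSym F (fun f => Fin (ar f) → A) A) (dar ar) Empty

variable {F : Type} {ar : F → ℕ} {A : Type}
variable (I : (f : F) → (Fin (ar f) → A) → A) (tp : F) (R : Set (Rule F ar ℕ))

inductive Shadow : DLTerm F ar A → Tm F ar Empty → Prop where
  | node (f : F) (as : Fin (ar f) → A)
      (ts : Fin (ar f) → DLTerm F ar A)
      (ss : Fin (ar f) → Tm F ar Empty) :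
      f ≠ tp → (∀ i, Shadow (ts i) (ss i)) → (∀ i, as i = geval I (ss i)) →
      Shadow (.app (Sum.inl ⟨f, as⟩) ts) (.app f ss)
  | nab (b b' : A) (ts : Fin 1 → DLTerm F ar A)
      (s s' : Tm F ar Empty) (p : List ℕ) :
      OutAt R p s s' → Shadow (ts 0) s' → geval I s' = b' → tpFree tp s →
      Shadow (.app (Sum.inr (b, b')) ts) s

def ShadowStep (t u : DLTerm F ar A) (s s' : Tm F ar Empty) : Prop :=
  Shadow I tp R u s' ∧ (OStep R s s' ∨ (s' = s ∧ liveCount u < liveCount t))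

variable {I tp R}
variable {Sred : Set (LSym F (fun f => Fin (ar f) → A))}

theorem Shadow.tpFree_shadow {t s} (h : Shadow I tp R t s) : tpFree tp s := by
  induction h with
  | node f _ _ _ hne _ _ ih => exact ⟨hne, ih⟩
  | nab _ _ _ _ _ _ _ _ _ htf => exact htf

theorem Shadow.geval_eq {f : F} {as ts s}
    (h : Shadow I tp R (.app (Sum.inl ⟨f, as⟩) ts) s) : geval I s = I f as := by
  cases h with
  | node f as ts ss _ _ hlab => exact congrArg (I f) (funext fun i => (hlab i).symm)

theorem Shadow.not_isRedex (hcomplete : CompleteLab I (fun _ a => a) tp R Sred) {f : F} {as ts s}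
    (h : Shadow I tp R (.app (Sum.inl ⟨f, as⟩) ts) s)
    (hS : (⟨f, as⟩ : LSym F (fun f => Fin (ar f) → A)) ∉ Sred) : ¬ IsRedex R s := by
  intro hred
  obtain ⟨g, hg, hroot⟩ := hcomplete s h.tpFree_shadow hred
  cases h with
  | node f as ts ss _ _ hlab =>
    simp only [glab, labT, Tm.rootSym, Option.some.injEq] at hroot
    have : g = ⟨f, as⟩ := by rw [← hroot]; exact congrArg _ (funext fun i => (hlab i).symm)
    exact hS (this ▸ hg)

theorem Shadow.subAt {t p} (hp : MuPos (dlMu Sred) t p) {s w} (h : Shadow I tp R t s)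
    (hw : t.subAt p = some w) : ∃ sp, s.subAt p = some sp ∧ Shadow I tp R w sp := by
  induction hp generalizing s with
  | nil t =>
    obtain rfl : t = w := by simpa [Tm.subAt] using hw
    exact ⟨s, by simp [Tm.subAt], h⟩
  | cons f ts i p hμ hp ih =>
    cases h with
    | node f as ts ss _ hts _ =>
      have hlt : (i : ℕ) < ar f := i.isLt
      simp only [Tm.subAt, dif_pos i.isLt, Fin.eta] at hw
      simp only [Tm.subAt, dif_pos hlt]
      exact ih (hts i) hw
    | nab => exact absurd hμ (by simp [dlMu])

theorem Shadow.not_isRedex_above (hcomplete : CompleteLab I (fun _ a => a) tp R Sred)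
    {t p} (hp : MuPos (dlMu Sred) t p) {s} (h : Shadow I tp R t s) :
    ∀ q, q <+: p → q ≠ p → ∀ sq, s.subAt q = some sq → ¬ IsRedex R sq := by
  induction hp generalizing s with
  | nil t => exact fun q hq hne => absurd (List.prefix_nil.mp hq) hne
  | cons f ts i p hμ hp ih =>
    cases h with
    | node f as ts ss hne hts hlab =>
      rintro (_ | ⟨j, q⟩) hq hqp sq hsq
      · obtain rfl : Tm.app f ss = sq := by simpa [Tm.subAt] using hsq
        exact (Shadow.node f as ts ss hne hts hlab).not_isRedex hcomplete hμ
      · obtain ⟨rfl, hq'⟩ := List.cons_prefix_cons.mp hq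
        have hlt : (i : ℕ) < ar f := i.isLt
        simp only [Tm.subAt, dif_pos hlt] at hsq
        exact ih (hts i) q hq' (fun h => hqp (by rw [h])) sq hsq
    | nab => exact absurd hμ (by simp [dlMu])

theorem Shadow.node_update {f : F} {as : Fin (ar f) → A}
    {ts : Fin (ar f) → DLTerm F ar A}
    {ss : Fin (ar f) → Tm F ar Empty} (hne : f ≠ tp) (hts : ∀ j, Shadow I tp R (ts j) (ss j))
    (hlab : ∀ j, as j = geval I (ss j)) (i : Fin (ar f)) {u s'} (hu : Shadow I tp R u s') :
    Shadow I tp R (.app (Sum.inl ⟨f, Function.update as i (geval I s')⟩)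
      (Function.update ts i u : Fin (ar f) → DLTerm F ar A)) (.app f (Function.update ss i s')) := by
  refine Shadow.node f _ _ _ hne (fun j => ?_) (fun j => ?_) <;>
    rcases eq_or_ne j i with rfl | hji
  · simpa using hu
  · simpa [Function.update_of_ne hji] using hts j
  · simp
  · simpa [Function.update_of_ne hji] using hlab j

theorem Shadow.replaceAt {t p} (hp : MuPos (dlMu Sred) t p) {s a t' sp s'}
    (h : Shadow I tp R t s) (ht' : t.replaceAt p a = some t') (hsp : s.subAt p = some sp)
    (ha : Shadow I tp R a s') (hval : geval I s' = geval I sp) :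
    ∃ s'', s.replaceAt p s' = some s'' ∧ Shadow I tp R t' s'' ∧ geval I s'' = geval I s := by
  induction hp generalizing s t' sp with
  | nil t =>
    obtain rfl : a = t' := by simpa [Tm.replaceAt] using ht'
    obtain rfl : s = sp := by simpa [Tm.subAt] using hsp
    exact ⟨s', by simp [Tm.replaceAt], ha, hval⟩
  | cons f ts i p hμ hp ih =>
    cases h with
    | node f as ts ss hne hts hlab =>
      simp only [Tm.replaceAt, dif_pos i.isLt, Fin.eta] at ht'
      obtain ⟨u, hu, rfl⟩ := Option.map_eq_some_iff.mp ht'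
      -- retype `i` as an argument index of `f`
      obtain ⟨i, rfl⟩ : ∃ k : Fin (ar f),
          (k : Fin (dar ar (Sum.inl ⟨f, as⟩ : DSym F (fun f => Fin (ar f) → A) A))) = i := ⟨i, rfl⟩
      have hlt : (i : ℕ) < ar f := i.isLt
      simp only [Tm.subAt, dif_pos hlt] at hsp
      obtain ⟨si, hsi, hshi, hvali⟩ := ih (hts i) hu hsp hval
      have hlabi : Function.update as i (geval I si) = as := by
        rw [hvali, ← hlab, Function.update_eq_self]
      refine ⟨.app f (Function.update ss i si), ?_,
        hlabi ▸ Shadow.node_update hne hts hlab i hshi, ?_⟩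
      · simp only [Tm.replaceAt, dif_pos hlt]
        rw [show (⟨(i : ℕ), hlt⟩ : Fin (ar f)) = i from rfl, hsi, Option.map_some]
      · rw [geval_app_update, hvali, Function.update_eq_self]
        rfl
    | nab => exact absurd hμ (by simp [dlMu])

theorem Shadow.labT_subst (m : Tm F ar ℕ) {σ : ℕ → DLTerm F ar A} {τ : ℕ → Tm F ar Empty}
    {α : ℕ → A} (hm : tpFree tp m)
    (h : ∀ x, m.occurs x → Shadow I tp R (σ x) (τ x) ∧ geval I (τ x) = α x) :
    Shadow I tp R ((embL (labT I (fun _ a => a) α m)).subst σ) (m.subst τ) := by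
  induction m with
  | var x => exact (h x rfl).1
  | app f ms ih =>
    refine Shadow.node f _ _ _ hm.1 (fun i => ih i (hm.2 i) fun x hx => h x ⟨i, hx⟩)
      (fun i => ?_)
    exact (geval_subst_eq I τ (ms i) fun x hx => (h x ⟨i, hx⟩).2).symm

theorem Shadow.embL_glab (t : Tm F ar Empty) (ht : tpFree tp t) :
    Shadow I tp R (embL (glab I (fun _ a => a) t)) t := by
  induction t with
  | var x => exact x.elim
  | app f ts ih => exact Shadow.node f _ _ _ ht.1 (fun i => ih i (ht.2 i)) (fun _ => rfl)

theorem Shadow.exists_subst_of_labT_subst (m : Tm F ar ℕ) (hm : Linear m)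
    {σ : ℕ → DLTerm F ar A} {s : Tm F ar Empty} {α : ℕ → A}
    (h : Shadow I tp R ((embL (labT I (fun _ a => a) α m)).subst σ) s)
    (hval : geval I s = m.eval I α) :
    ∃ τ : ℕ → Tm F ar Empty, s = m.subst τ ∧
      ∀ x, m.occurs x → Shadow I tp R (σ x) (τ x) ∧ geval I (τ x) = α x := by
  classical
  induction m generalizing s with
  | var x =>
    refine ⟨fun _ => s, rfl, fun z hz => ?_⟩
    obtain rfl : x = z := hz
    exact ⟨h, hval⟩
  | app f ms ih =>
    cases h with
    | node f as ts ss _ hts hlab =>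
      choose τs hτs hocc using fun i => ih i (hm.of_app i) (hts i) (hlab i).symm
      let τ : ℕ → Tm F ar Empty := fun x =>
        if hx : ∃ i, (ms i).occurs x then τs hx.choose x else .app f ss
      have hτ : ∀ i x, (ms i).occurs x → τ x = τs i x := by
        intro i x hx
        have hex : ∃ i, (ms i).occurs x := ⟨i, hx⟩
        simp only [τ, dif_pos hex, hm.eq_of_occurs hex.choose_spec hx]
      refine ⟨τ, ?_, ?_⟩
      · refine congrArg (Tm.app f) (funext fun i => ?_)
        rw [hτs i]
        exact Tm.subst_congr (ms i) fun x hx => (hτ i x hx).symm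
      · rintro x ⟨i, hx⟩
        rw [hτ i x hx]
        exact hocc i x hx

theorem Shadow.dlorg_step (hTRS : IsTRS R) (hRtp : ∀ lr ∈ R, tpFree tp lr.1 ∧ tpFree tp lr.2)
    (hll : ∀ lr ∈ R, Linear lr.1) {lr} (hlr : lr ∈ DLorg I (fun _ a => a) R)
    {σ : ℕ → DLTerm F ar A} {s : Tm F ar Empty} (h : Shadow I tp R (lr.1.subst σ) s) :
    ∃ s', geval I s' = geval I s ∧ ShadowStep I tp R (lr.1.subst σ) (lr.2.subst σ) s s' := by
  obtain ⟨ρ, hρ, α, hl1, hcase⟩ := hlr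
  rw [hl1] at h ⊢
  obtain ⟨f, ls, hf⟩ : ∃ f ls, ρ.1 = Tm.app f ls := by
    cases hρ1 : ρ.1 with
    | var x => exact absurd hρ1 ((hTRS ρ hρ).1 x)
    | app f ls => exact ⟨f, ls, rfl⟩
  have hval : geval I s = ρ.1.eval I α := by
    rw [hf] at h ⊢
    exact h.geval_eq
  obtain ⟨τ, rfl, hτ⟩ := h.exists_subst_of_labT_subst ρ.1 (hll ρ hρ) hval
  have hvars x (hx : ρ.2.occurs x) := hτ x ((hTRS ρ hρ).2 x hx)
  have hrhs := Shadow.labT_subst ρ.2 (hRtp ρ hρ).2 hvars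
  have hval' : geval I (ρ.2.subst τ) = ρ.2.eval I α :=
    geval_subst_eq I τ ρ.2 fun x hx => (hvars x hx).2
  rcases hcase with ⟨heq, hl2⟩ | ⟨-, hl2⟩ <;> rw [hl2]
  · exact ⟨_, by rw [hval', ← heq, hval], hrhs, Or.inl ⟨[], OutAt.root hρ τ⟩⟩
  · refine ⟨_, rfl, Shadow.nab _ _ _ _ _ [] (OutAt.root hρ τ) hrhs hval' h.tpFree_shadow,
      Or.inr ⟨rfl, ?_⟩⟩
    rw [hf]
    simp [nabla, Tm.subst, labT, embL, liveCount]

theorem Shadow.dlprp_step (hcomplete : CompleteLab I (fun _ a => a) tp R Sred) {lr}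
    (hlr : lr ∈ DLprp I (fun _ a => a) R Sred)
    {σ : ℕ → DLTerm F ar A} {s : Tm F ar Empty} (h : Shadow I tp R (lr.1.subst σ) s) :
    ∃ s', geval I s' = geval I s ∧ ShadowStep I tp R (lr.1.subst σ) (lr.2.subst σ) s s' := by
  obtain ⟨f, as, i, b, b', -, -, hred, hl1, hcase⟩ := hlr
  have hlhs : lr.1.subst σ = .app (Sum.inl ⟨f, as⟩)
      (Function.update (fun j : Fin (ar f) => σ j) i (nabla b b' (σ i)) :
        Fin (ar f) → DLTerm F ar A) := by
    rw [hl1]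
    refine congrArg _ (funext fun (j : Fin (ar f)) => ?_)
    rcases eq_or_ne j i with rfl | hji
    · simp [nabla, Tm.subst]
    · simp [hji, Tm.subst]
  rw [hlhs] at h ⊢
  have hnr := h.not_isRedex hcomplete hred
  have htp := h.tpFree_shadow
  cases h with
  | node _ _ _ ss hne hts hlab =>
    have hi := hts i
    rw [Function.update_self] at hi
    cases hi with
    | nab _ _ _ _ s' p hout hs' hval' _ =>
      have hchildren : Function.update (Function.update (fun j : Fin (ar f) => σ j) i
          (nabla b b' (σ i))) i (σ i) = fun j : Fin (ar f) => σ j := by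
        rw [Function.update_idem]
        exact Function.update_eq_self i _
      have hrhs := Shadow.node_update hne hts hlab i (u := σ i) hs'
      rw [hval', hchildren] at hrhs
      have hout' := OutAt.cons i hnr hout
      have hval : geval I (.app f ss) = I f as := congrArg (I f) (funext fun j => (hlab j).symm)
      have hval'' : geval I (.app f (Function.update ss i s')) = I f (Function.update as i b') := by
        rw [geval_app_update, hval', show (fun j => geval I (ss j)) = as from
          funext fun j => (hlab j).symm]
      rcases hcase with ⟨heq, hl2⟩ | ⟨-, hl2⟩ <;> rw [hl2]
      · exact ⟨_, by rw [hval'', ← heq, hval], hrhs, Or.inl ⟨_, hout'⟩⟩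
      · exact ⟨_, rfl, Shadow.nab _ _ _ _ _ _ hout' hrhs hval'' htp,
          Or.inr ⟨rfl, by simp [liveCount, nabla, Tm.subst]⟩⟩

theorem Shadow.muStep (hTRS : IsTRS R) (hRtp : ∀ lr ∈ R, tpFree tp lr.1 ∧ tpFree tp lr.2)
    (hll : ∀ lr ∈ R, Linear lr.1) (hcomplete : CompleteLab I (fun _ a => a) tp R Sred)
    {t u : DLTerm F ar A} {s : Tm F ar Empty} (h : Shadow I tp R t s)
    (hstep : MuStep (DLorg I (fun _ a => a) R ∪ DLprp I (fun _ a => a) R Sred) (dlMu Sred) t u) :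
    ∃ s', ShadowStep I tp R t u s s' := by
  obtain ⟨p, ⟨lr, hlr, σ, hsub, hrepl⟩, hp⟩ := hstep
  obtain ⟨sp, hsp, hshp⟩ := h.subAt hp hsub
  obtain ⟨sp', hval, hshp', hroot⟩ : ∃ sp', geval I sp' = geval I sp ∧
      ShadowStep I tp R (lr.1.subst σ) (lr.2.subst σ) sp sp' := by
    rcases hlr with hlr | hlr
    · exact hshp.dlorg_step hTRS hRtp hll hlr
    · exact hshp.dlprp_step hcomplete hlr
  obtain ⟨s', hs', hsh', -⟩ := h.replaceAt hp hrepl hsp hshp' hval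
  refine ⟨s', hsh', ?_⟩
  rcases hroot with ⟨q, hq⟩ | ⟨rfl, hlt⟩
  · exact Or.inl ⟨p ++ q, hq.append hsp hs' (h.not_isRedex_above hcomplete hp)⟩
  · rw [Tm.replaceAt_self_of_subAt hsp, Option.some_inj] at hs'
    have := liveCount_replaceAt hp hsub hrepl
    exact Or.inr ⟨hs'.symm, by omega⟩

end Shadow

end TRSStmt

namespace Stmt

open TRSStmt

theorem dl_complete_general {F : Type} {ar : F → ℕ} {A : Type}
    (I : (f : F) → (Fin (ar f) → A) → A)
    (tp : F)
    (R : Set (Rule F ar ℕ)) (hTRS : IsTRS R)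
    (hRtp : ∀ lr ∈ R, tpFree tp lr.1 ∧ tpFree tp lr.2)
    (hll : ∀ lr ∈ R, Linear lr.1)
    -- the maximal labeling: `λ_f(a₁,…,aₙ) = (a₁,…,aₙ)`
    (Sred : Set (LSym F (fun f => Fin (ar f) → A)))
    (hcomplete : CompleteLab I (fun _ a => a) tp R Sred)
    (hOGT : OGTtp R tp) :
    ¬ ∃ (t0 : Tm F ar Empty)
        (g : ℕ → Tm (DSym F (fun f => Fin (ar f) → A) A) (dar ar) Empty),
      tpFree tp t0 ∧
      g 0 = embL (glab I (fun _ a => a) t0) ∧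
      ∀ n, MuStep (DLorg I (fun _ a => a) R ∪ DLprp I (fun _ a => a) R Sred)
             (dlMu Sred) (g n) (g (n + 1)) := by
  rintro ⟨t0, g, ht0, hg0, hg⟩
  have hOGT' : NoInf fun s s' => tpFree tp s ∧ OStep R s s' :=
    fun ⟨f, hf⟩ => hOGT ⟨f, fun n => (hf n).1, fun n => (hf n).2⟩
  refine not_exists_chain_of_lex_simulation liveCount hOGT' (fun t u s hts htu => ?_)
    (Shadow.embL_glab (R := R) t0 ht0) ⟨g, hg0, hg⟩
  obtain ⟨s', hs', hstep⟩ := hts.muStep hTRS hRtp hll hcomplete htu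
  exact ⟨s', hs', hstep.imp_left fun h => ⟨hts.tpFree_shadow, h⟩⟩

/-- Theorem 6.14: for a left-linear TRS `R` and a complete, maximal,
    core C-labeling, outermost ground termination of `R` implies that the dynamic
    labeling `DL(A,λ,R)` is terminating on the set of correctly labeled ground terms
    `lab(T(Σ,∅))`. -/
theorem dl_complete {F : Type} {ar : F → ℕ} {A : Type}
    (I : (f : F) → (Fin (ar f) → A) → A)
    (tp : F) (htp : ar tp = 1)
    (htpconst : ∀ as as' : Fin (ar tp) → A, I tp as = I tp as')
    (R : Set (Rule F ar ℕ)) (hTRS : IsTRS R) (hfin : R.Finite)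
    (hRtp : ∀ lr ∈ R, tpFree tp lr.1 ∧ tpFree tp lr.2)
    (hll : ∀ lr ∈ R, Linear lr.1)
    (hcmodel : IsCModel I R)
    -- the maximal labeling: `λ_f(a₁,…,aₙ) = (a₁,…,aₙ)`
    (Sred : Set (LSym F (fun f => Fin (ar f) → A)))
    (hSred : ∀ g ∈ Sred, g.1 ≠ tp)
    (hcomplete : CompleteLab I (fun _ a => a) tp R Sred)
    (hcore : CoreAlg I tp)
    (hOGT : OGTtp R tp) :
    ¬ ∃ (t0 : Tm F ar Empty)
        (g : ℕ → Tm (DSym F (fun f => Fin (ar f) → A) A) (dar ar) Empty),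
      tpFree tp t0 ∧
      g 0 = embL (glab I (fun _ a => a) t0) ∧
      ∀ n, MuStep (DLorg I (fun _ a => a) R ∪ DLprp I (fun _ a => a) R Sred)
             (dlMu Sred) (g n) (g (n + 1)) :=
  dl_complete_general I tp R hTRS hRtp hll Sred hcomplete hOGT

end Stmt
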